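/- Under Assumption 2, suppose P(X=x, T=t, R^X=1, R^T=1) > 0 and, for every y ∈ 𝒴 with P(X=x, Y=y, R^X=1, R^T=1) > 0, the response probability P(R^Y=1 | X=x, Y=y, R^X=1, R^T=1) is strictly positive. Then the Fredholm (linear system) equation holds: P(R^Y=0 | T=t, X=x, R^T=1, R^X=1) = Σ_{y ∈ 𝒴} P(Y=y, R^Y=1 | T=t, X=x, R^T=1, R^X=1) · ζ_x(y), where ζ_x(y) = P(R^Y=0 | X=x, Y=y, R^X=1, R^T=1) / P(R^Y=1 | X=x, Y=y, R^X=1, R^T=1). -/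

import Mathlib

open scoped Classical
noncomputable section

namespace CATEMNAR

variable {Ω : Type*} [Fintype Ω]

/-- Probability of the event `E` under the pmf `p` on the finite space `Ω`. -/
def Pr (p : Ω → ℝ) (E : Ω → Prop) : ℝ := ∑ ω, if E ω then p ω else 0

/-- Conditional probability `P(E | C)` (junk value `0` when `P(C) = 0`). -/
def CPr (p : Ω → ℝ) (E C : Ω → Prop) : ℝ := Pr p (fun ω => E ω ∧ C ω) / Pr p C

/-- Conditional independence `A ⫫ B | C` under `p`: for all values `a, b, c` with
`P(C = c) > 0`, `P(A = a, B = b | C = c) = P(A = a | C = c) * P(B = b | C = c)`. -/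
def CondIndep {α β γ : Type*} (p : Ω → ℝ) (A : Ω → α) (B : Ω → β) (C : Ω → γ) : Prop :=
  ∀ (a : α) (b : β) (c : γ), 0 < Pr p (fun ω => C ω = c) →
    CPr p (fun ω => A ω = a ∧ B ω = b) (fun ω => C ω = c) =
      CPr p (fun ω => A ω = a) (fun ω => C ω = c) *
        CPr p (fun ω => B ω = b) (fun ω => C ω = c)

lemma Pr_congr {p : Ω → ℝ} {E F : Ω → Prop} (h : ∀ ω, E ω ↔ F ω) : Pr p E = Pr p F := by
  unfold Pr; exact Finset.sum_congr rfl fun ω _ => by rw [if_congr (h ω) rfl rfl]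

lemma Pr_nonneg {p : Ω → ℝ} (hp0 : ∀ ω, 0 ≤ p ω) (E : Ω → Prop) : 0 ≤ Pr p E := by
  unfold Pr
  exact Finset.sum_nonneg fun ω _ => by split <;> simp [hp0 ω]

lemma Pr_mono {p : Ω → ℝ} (hp0 : ∀ ω, 0 ≤ p ω) {E F : Ω → Prop}
    (h : ∀ ω, E ω → F ω) : Pr p E ≤ Pr p F := by
  unfold Pr
  refine Finset.sum_le_sum fun ω _ => ?_
  by_cases hE : E ω
  · simp [hE, h ω hE]
  · simp only [hE, if_false]
    split <;> simp [hp0 ω]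

lemma Pr_partition {𝒴 : Type*} [Fintype 𝒴] {p : Ω → ℝ} (Y : Ω → 𝒴) (E : Ω → Prop) :
    Pr p E = ∑ y : 𝒴, Pr p (fun ω => Y ω = y ∧ E ω) := by
  unfold Pr
  rw [Finset.sum_comm]
  refine Finset.sum_congr rfl fun ω _ => ?_
  by_cases hE : E ω
  · simp [hE]
  · simp [hE]

/-- Under Assumption 2, the Fredholm (linear-system) equation holds:
`P(R^Y=0 | T=t, X=x, R^T=1, R^X=1)
  = Σ_y P(Y=y, R^Y=1 | T=t, X=x, R^T=1, R^X=1) * ζ_x(y)`,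
where `ζ_x(y)` is the conditional missingness odds of the outcome. -/
theorem stmt_3 {𝒳 𝒯 𝒴 : Type*} [Fintype 𝒳] [Fintype 𝒯] [Fintype 𝒴]
    (p : Ω → ℝ) (hp0 : ∀ ω, 0 ≤ p ω) (hp1 : ∑ ω, p ω = 1)
    (X : Ω → 𝒳) (T : Ω → 𝒯) (Y : Ω → 𝒴) (RX RT RY : Ω → Bool)
    (hRX : CondIndep p RX Y (fun ω => (X ω, T ω)))
    (hRT : CondIndep p RT Y (fun ω => (X ω, T ω, RX ω)))
    (hRY : CondIndep p RY T (fun ω => (X ω, Y ω, RX ω, RT ω)))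
    (x : 𝒳) (t : 𝒯)
    (hpos1 : 0 < Pr p (fun ω => X ω = x ∧ T ω = t ∧ RX ω = true ∧ RT ω = true))
    (hpos2 : ∀ y : 𝒴, 0 < Pr p (fun ω => X ω = x ∧ Y ω = y ∧ RX ω = true ∧ RT ω = true) →
      0 < CPr p (fun ω => RY ω = true)
        (fun ω => X ω = x ∧ Y ω = y ∧ RX ω = true ∧ RT ω = true)) :
    CPr p (fun ω => RY ω = false)
        (fun ω => T ω = t ∧ X ω = x ∧ RT ω = true ∧ RX ω = true) =
      ∑ y : 𝒴,
        CPr p (fun ω => Y ω = y ∧ RY ω = true)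
            (fun ω => T ω = t ∧ X ω = x ∧ RT ω = true ∧ RX ω = true) *
          (CPr p (fun ω => RY ω = false)
              (fun ω => X ω = x ∧ Y ω = y ∧ RX ω = true ∧ RT ω = true) /
            CPr p (fun ω => RY ω = true)
              (fun ω => X ω = x ∧ Y ω = y ∧ RX ω = true ∧ RT ω = true)) := by
  classical
  set C : Ω → Prop := fun ω => T ω = t ∧ X ω = x ∧ RT ω = true ∧ RX ω = true with hCdef
  set B : 𝒴 → Ω → Prop := fun y ω => X ω = x ∧ Y ω = y ∧ RX ω = true ∧ RT ω = true with hBdef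
  have hPC : 0 < Pr p C := by
    have := hpos1
    rwa [Pr_congr (F := C) (fun ω => by simp only [hCdef]; tauto)] at this
  -- key termwise identity
  have key : ∀ y : 𝒴,
      Pr p (fun ω => Y ω = y ∧ RY ω = false ∧ C ω) =
      Pr p (fun ω => Y ω = y ∧ RY ω = true ∧ C ω) *
        (CPr p (fun ω => RY ω = false) (B y) / CPr p (fun ω => RY ω = true) (B y)) := by
    intro y
    by_cases hBy : 0 < Pr p (B y)
    · have hBy' : 0 < Pr p (fun ω => (X ω, Y ω, RX ω, RT ω) = (x, y, true, true)) := by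
        rwa [Pr_congr (F := B y)
          (fun ω => by simp only [hBdef, Prod.mk.injEq])]
      have hPBne : Pr p (B y) ≠ 0 := ne_of_gt hBy
      have hfac : ∀ r : Bool,
          Pr p (fun ω => Y ω = y ∧ RY ω = r ∧ C ω) =
          CPr p (fun ω => RY ω = r) (B y) * Pr p (fun ω => T ω = t ∧ B y ω) := by
        intro r
        have h := hRY r t (x, y, true, true) hBy'
        have hrw : ∀ (E : Ω → Prop),
            CPr p E (fun ω => (X ω, Y ω, RX ω, RT ω) = (x, y, true, true)) =
            CPr p E (B y) := by
          intro E
          unfold CPr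
          rw [Pr_congr (F := fun ω => E ω ∧ B y ω)
              (fun ω => by simp only [hBdef, Prod.mk.injEq]),
            Pr_congr (E := fun ω => (X ω, Y ω, RX ω, RT ω) = (x, y, true, true)) (F := B y)
              (fun ω => by simp only [hBdef, Prod.mk.injEq])]
        rw [hrw, hrw, hrw] at h
        unfold CPr at h
        field_simp at h
        have h2 : Pr p (fun ω => (RY ω = r ∧ T ω = t) ∧ B y ω) * Pr p (B y) =
            Pr p (fun ω => RY ω = r ∧ B y ω) * Pr p (fun ω => T ω = t ∧ B y ω) :=
          mul_right_cancel₀ hPBne (by linear_combination (Pr p (B y)) * h)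
        rw [Pr_congr (F := fun ω => (RY ω = r ∧ T ω = t) ∧ B y ω)
            (fun ω => by simp only [hBdef, hCdef]; tauto)]
        unfold CPr
        rw [div_mul_eq_mul_div, eq_div_iff hPBne]
        linear_combination h2
      have hzt : 0 < CPr p (fun ω => RY ω = true) (B y) := hpos2 y hBy
      rw [hfac false, hfac true]
      field_simp
    · have hB0 : Pr p (B y) = 0 :=
        le_antisymm (not_lt.mp hBy) (Pr_nonneg hp0 _)
      have hz : ∀ r : Bool, Pr p (fun ω => Y ω = y ∧ RY ω = r ∧ C ω) = 0 := by
        intro r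
        refine le_antisymm ?_ (Pr_nonneg hp0 _)
        calc Pr p (fun ω => Y ω = y ∧ RY ω = r ∧ C ω)
            ≤ Pr p (B y) := Pr_mono hp0 (fun ω => by simp only [hBdef, hCdef]; tauto)
          _ = 0 := hB0
      rw [hz false, hz true, zero_mul]
  -- assemble
  have hLHS : CPr p (fun ω => RY ω = false) C =
      (∑ y : 𝒴, Pr p (fun ω => Y ω = y ∧ RY ω = false ∧ C ω)) / Pr p C := by
    unfold CPr
    congr 1
    exact Pr_partition Y _
  rw [hLHS, Finset.sum_div]
  refine Finset.sum_congr rfl fun y _ => ?_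
  have hterm : CPr p (fun ω => Y ω = y ∧ RY ω = true) C =
      Pr p (fun ω => Y ω = y ∧ RY ω = true ∧ C ω) / Pr p C := by
    unfold CPr
    congr 1
    exact Pr_congr (fun ω => by tauto)
  rw [hterm, key y]
  simp only [hBdef]
  ring


end CATEMNAR
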